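/- Let c > 0, d > 0, r > 0, T > 0. Define erf(z) = (2/√π)·∫₀^z e^{−t²} dt, φ(x) = (e^{√(c/d)·x}/2)·(1 + erf( −x/(2√(dT)) − √(cT) )), C₀ = (1/(2r))·√(π/(2dc)), K_T(x) = C₀·(φ(x) + φ(−x)), and K₀(x) = C₀·e^{−√(c/d)·|x|}. Then: (i) K_T(x) < K₀(x) for every x ∈ ℝ; and (ii) lim_{x→+∞} K_T(x)/K₀(x) = 1 and lim_{x→−∞} K_T(x)/K₀(x) = 1. -/

import Mathlib

open MeasureTheory

/-- The Gauss error function. -/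
noncomputable def erf (z : ℝ) : ℝ :=
  (2 / Real.sqrt Real.pi) * ∫ t in (0 : ℝ)..z, Real.exp (-t ^ 2)

/-!
Write `u = x / (2√(dT))` and `b = √(cT)`, so that `√(c/d) x = 2bu`. Both kernels are even, and for
`u ≥ 0` one has `2(K_T - K₀)/C₀ = e^{2bu}(1 - erf(u+b)) - e^{-2bu}(1 - erf(u-b))`. Through the
Gaussian tail `1 - erf v = (2/√π) ∫_{t>0} e^{-(t+v)²}` both terms are integrals over `t > 0` whose
integrands differ by the factor `e^{-4bt} < 1`, so `K_T < K₀`. As `u → ∞`,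
`K_T/K₀ = (e^{4bu}(1 - erf(u+b)) + 1 + erf(u-b))/2`, and the tail bound `1 - erf v ≤ e^{-v²}`
makes the first term at most `e^{-(u-b)²}/2 → 0`.
-/

open Real Set Filter Topology

theorem setIntegral_lt_setIntegral_of_forall_lt {X : Type*} [MeasurableSpace X] {μ : Measure X}
    {s : Set X} {f g : X → ℝ} (hs : MeasurableSet s) (hμ : μ s ≠ 0)
    (hf : IntegrableOn f s μ) (hg : IntegrableOn g s μ) (hlt : ∀ x ∈ s, f x < g x) :
    ∫ x in s, f x ∂μ < ∫ x in s, g x ∂μ := by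
  rw [← sub_pos, ← integral_sub hg hf]
  have hsupp : s ⊆ Function.support (g - f) ∩ s := fun x hx =>
    ⟨(sub_pos.mpr (hlt x hx)).ne', hx⟩
  rw [setIntegral_pos_iff_support_of_nonneg_ae
    ((ae_restrict_iff' hs).2 (ae_of_all _ fun x hx => sub_nonneg.mpr (hlt x hx).le)) (hg.sub hf)]
  exact (pos_iff_ne_zero.mpr hμ).trans_le (measure_mono hsupp)

theorem setIntegral_Ioi_comp_add_right {E : Type*} [NormedAddCommGroup E] [NormedSpace ℝ E]
    (f : ℝ → E) (a v : ℝ) : ∫ t in Ioi a, f (t + v) = ∫ t in Ioi (a + v), f t := by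
  have hpre : (· + v) ⁻¹' Ioi (a + v) = Ioi a := by
    ext t; simp
  simpa [hpre] using (measurePreserving_add_right volume v).setIntegral_preimage_emb
    (MeasurableEquiv.addRight v).measurableEmbedding f (Ioi (a + v))

theorem integrable_exp_neg_sq : Integrable fun t : ℝ => exp (-t ^ 2) := by
  simpa using integrable_exp_neg_mul_sq one_pos

theorem integral_exp_neg_sq_Ioi_zero : ∫ t in Ioi (0 : ℝ), exp (-t ^ 2) = √π / 2 := by
  simpa using integral_gaussian_Ioi 1

theorem erf_neg (z : ℝ) : erf (-z) = -erf z := by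
  have h := intervalIntegral.integral_comp_neg (a := 0) (b := z) fun t : ℝ => exp (-t ^ 2)
  simp only [neg_sq, neg_zero] at h
  rw [erf, erf, h, intervalIntegral.integral_symm]
  ring

theorem one_sub_erf_eq_integral_Ioi (v : ℝ) :
    1 - erf v = 2 / √π * ∫ t in Ioi v, exp (-t ^ 2) := by
  have hsplit := intervalIntegral.integral_interval_add_Ioi (a := 0) (b := v)
    integrable_exp_neg_sq.integrableOn integrable_exp_neg_sq.integrableOn
  have hpi : √π ≠ 0 := by positivity
  rw [erf, eq_sub_of_add_eq (hsplit.trans integral_exp_neg_sq_Ioi_zero)]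
  field_simp
  ring

theorem one_sub_erf_eq_integral_Ioi_zero (v : ℝ) :
    1 - erf v = 2 / √π * ∫ t in Ioi 0, exp (-(t + v) ^ 2) := by
  rw [one_sub_erf_eq_integral_Ioi, setIntegral_Ioi_comp_add_right (fun t => exp (-t ^ 2)),
    zero_add]

theorem one_sub_erf_nonneg (v : ℝ) : 0 ≤ 1 - erf v := by
  rw [one_sub_erf_eq_integral_Ioi]
  have : 0 ≤ ∫ t in Ioi v, exp (-t ^ 2) :=
    setIntegral_nonneg measurableSet_Ioi fun t _ => (exp_pos _).le
  positivity

theorem one_sub_erf_le_exp_neg_sq {v : ℝ} (hv : 0 ≤ v) : 1 - erf v ≤ exp (-v ^ 2) := by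
  have hint : ∫ t in Ioi (0 : ℝ), exp (-v ^ 2) * exp (-t ^ 2) = exp (-v ^ 2) * (√π / 2) := by
    rw [integral_const_mul, integral_exp_neg_sq_Ioi_zero]
  have hmono : ∫ t in Ioi (0 : ℝ), exp (-(t + v) ^ 2)
      ≤ ∫ t in Ioi (0 : ℝ), exp (-v ^ 2) * exp (-t ^ 2) := by
    refine setIntegral_mono_on (integrable_exp_neg_sq.comp_add_right v).integrableOn
      (integrable_exp_neg_sq.const_mul _).integrableOn measurableSet_Ioi fun t ht => ?_
    rw [← exp_add, exp_le_exp]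
    nlinarith [mul_nonneg (le_of_lt ht) hv]
  have hpi : 0 < √π := by positivity
  calc 1 - erf v ≤ 2 / √π * (exp (-v ^ 2) * (√π / 2)) := by
        rw [one_sub_erf_eq_integral_Ioi_zero, ← hint]; gcongr
    _ = exp (-v ^ 2) := by field_simp

theorem tendsto_erf_atTop : Tendsto erf atTop (𝓝 1) := by
  have hupper : Tendsto (fun v : ℝ => exp (-v ^ 2)) atTop (𝓝 0) :=
    tendsto_exp_atBot.comp <| tendsto_neg_atTop_atBot.comp <| tendsto_pow_atTop two_ne_zero
  have htail : Tendsto (fun v => 1 - erf v) atTop (𝓝 0) :=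
    tendsto_of_tendsto_of_tendsto_of_le_of_le' tendsto_const_nhds hupper
      (Eventually.of_forall one_sub_erf_nonneg)
      ((eventually_ge_atTop 0).mono fun v hv => one_sub_erf_le_exp_neg_sq hv)
  simpa using htail.const_sub 1

theorem exp_mul_one_sub_erf_add_lt {b : ℝ} (hb : 0 < b) (u : ℝ) :
    exp (2 * b * u) * (1 - erf (u + b)) < exp (-2 * b * u) * (1 - erf (u - b)) := by
  rw [one_sub_erf_eq_integral_Ioi_zero, one_sub_erf_eq_integral_Ioi_zero, mul_left_comm,
    mul_left_comm (exp _)]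
  refine mul_lt_mul_of_pos_left ?_ (by positivity)
  rw [← integral_const_mul, ← integral_const_mul]
  refine setIntegral_lt_setIntegral_of_forall_lt measurableSet_Ioi (by simp)
    ((integrable_exp_neg_sq.comp_add_right _).const_mul _).integrableOn
    ((integrable_exp_neg_sq.comp_add_right _).const_mul _).integrableOn fun t ht => ?_
  rw [← exp_add, ← exp_add, exp_lt_exp]
  nlinarith [mul_pos hb (mem_Ioi.mp ht)]

/-- `φ(x) + φ(-x)` in the variable `u = x / (2√(dT))`, with `b = √(cT)`; in this variable the
delay-free kernel `e^{-√(c/d)|x|}` is `e^{-2b|u|}`. -/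
noncomputable def delayKernel (b u : ℝ) : ℝ :=
  (exp (2 * b * u) * (1 + erf (-u - b)) + exp (-2 * b * u) * (1 + erf (u - b))) / 2

theorem delayKernel_neg (b u : ℝ) : delayKernel b (-u) = delayKernel b u := by
  rw [delayKernel, delayKernel, neg_neg]
  ring_nf

theorem delayKernel_eq_exp_add (b u : ℝ) : delayKernel b u = exp (-2 * b * u) +
    (exp (2 * b * u) * (1 - erf (u + b)) - exp (-2 * b * u) * (1 - erf (u - b))) / 2 := by
  rw [delayKernel, show -u - b = -(u + b) by ring, erf_neg]
  ring

theorem delayKernel_lt {b : ℝ} (hb : 0 < b) (u : ℝ) : delayKernel b u < exp (-2 * b * |u|) := by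
  wlog hu : 0 ≤ u generalizing u
  · simpa [delayKernel_neg] using this (-u) (by linarith)
  rw [abs_of_nonneg hu, delayKernel_eq_exp_add]
  linarith [exp_mul_one_sub_erf_add_lt hb u]

theorem tendsto_delayKernel_div_atTop {b : ℝ} (hb : 0 < b) :
    Tendsto (fun u => delayKernel b u / exp (-2 * b * |u|)) atTop (𝓝 1) := by
  have hshift : Tendsto (fun u => u - b) atTop atTop := tendsto_atTop_add_const_right _ _ tendsto_id
  have hfar : Tendsto (fun u => exp (4 * b * u) * (1 - erf (u + b))) atTop (𝓝 0) := by
    have hupper : Tendsto (fun u => exp (-(u - b) ^ 2)) atTop (𝓝 0) :=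
      tendsto_exp_atBot.comp <| tendsto_neg_atTop_atBot.comp <|
        (tendsto_pow_atTop two_ne_zero).comp hshift
    refine tendsto_of_tendsto_of_tendsto_of_le_of_le' tendsto_const_nhds hupper
      (Eventually.of_forall fun u => mul_nonneg (exp_pos _).le (one_sub_erf_nonneg _)) ?_
    filter_upwards [eventually_ge_atTop 0] with u hu
    calc exp (4 * b * u) * (1 - erf (u + b)) ≤ exp (4 * b * u) * exp (-(u + b) ^ 2) := by
          gcongr; exact one_sub_erf_le_exp_neg_sq (by positivity)
      _ = exp (-(u - b) ^ 2) := by rw [← exp_add]; ring_nf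
  have hnear : Tendsto (fun u => 1 + erf (u - b)) atTop (𝓝 2) := by
    simpa [one_add_one_eq_two] using (tendsto_erf_atTop.comp hshift).const_add 1
  have hsum := (hfar.add hnear).div_const 2
  rw [zero_add, div_self two_ne_zero] at hsum
  refine hsum.congr' ?_
  filter_upwards [eventually_ge_atTop 0] with u hu
  rw [abs_of_nonneg hu, delayKernel, eq_div_iff (exp_pos _).ne', show -u - b = -(u + b) by ring,
    erf_neg]
  have : exp (4 * b * u) * exp (-2 * b * u) = exp (2 * b * u) := by rw [← exp_add]; ring_nf
  linear_combination (1 - erf (u + b)) / 2 * this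

theorem tendsto_delayKernel_div_atBot {b : ℝ} (hb : 0 < b) :
    Tendsto (fun u => delayKernel b u / exp (-2 * b * |u|)) atBot (𝓝 1) := by
  simpa [Function.comp_def, delayKernel_neg] using
    (tendsto_delayKernel_div_atTop hb).comp tendsto_neg_atBot_atTop

theorem sqrt_div_mul_eq {c d T : ℝ} (hd : 0 < d) (hT : 0 < T) (x : ℝ) :
    √(c / d) * x = 2 * √(c * T) * (x / (2 * √(d * T))) := by
  have hdT : 0 < √(d * T) := by positivity
  rw [show c * T = c / d * (d * T) by field_simp, sqrt_mul' _ (by positivity)]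
  field_simp

theorem stmt19 (c d r T : ℝ) (hc : 0 < c) (hd : 0 < d) (hr : 0 < r) (hT : 0 < T)
    (φ KT K₀ : ℝ → ℝ) (C₀ : ℝ)
    (hφ : ∀ x : ℝ, φ x =
      (Real.exp (Real.sqrt (c / d) * x) / 2) *
        (1 + erf (-(x / (2 * Real.sqrt (d * T))) - Real.sqrt (c * T))))
    (hC₀ : C₀ = (1 / (2 * r)) * Real.sqrt (Real.pi / (2 * d * c)))
    (hKT : ∀ x : ℝ, KT x = C₀ * (φ x + φ (-x)))
    (hK₀ : ∀ x : ℝ, K₀ x = C₀ * Real.exp (-Real.sqrt (c / d) * |x|)) :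
    (∀ x : ℝ, KT x < K₀ x) ∧
    Filter.Tendsto (fun x : ℝ => KT x / K₀ x) Filter.atTop (nhds 1) ∧
    Filter.Tendsto (fun x : ℝ => KT x / K₀ x) Filter.atBot (nhds 1) := by
  set b := √(c * T)
  set s := 2 * √(d * T)
  have hb : 0 < b := by positivity
  have hs : 0 < s := by positivity
  have hC : 0 < C₀ := by rw [hC₀]; positivity
  have hscale : ∀ x, √(c / d) * x = 2 * b * (x / s) := sqrt_div_mul_eq hd hT
  have hKT' : ∀ x, KT x = C₀ * delayKernel b (x / s) := fun x => by
    rw [hKT, hφ, hφ, hscale, hscale, delayKernel]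
    ring_nf
  have hK₀' : ∀ x, K₀ x = C₀ * exp (-2 * b * |x / s|) := fun x => by
    rw [hK₀, abs_div, abs_of_pos hs, neg_mul, hscale]
    ring_nf
  have hratio : ∀ x, KT x / K₀ x = delayKernel b (x / s) / exp (-2 * b * |x / s|) := fun x => by
    rw [hKT', hK₀', mul_div_mul_left _ _ hC.ne']
  refine ⟨fun x => ?_, ?_, ?_⟩
  · rw [hKT', hK₀']
    exact mul_lt_mul_of_pos_left (delayKernel_lt hb _) hC
  · simpa only [hratio, Function.comp_def, id] using
      (tendsto_delayKernel_div_atTop hb).comp (tendsto_id.atTop_div_const hs)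
  · simpa only [hratio, Function.comp_def, id] using
      (tendsto_delayKernel_div_atBot hb).comp (tendsto_id.atBot_div_const hs)
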